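/- Let F ∈ C¹(ℝ,ℝ) satisfy (F1) and let v ∈ H¹(ℝ²) be a nontrivial weak solution of −Δv + v = (I_α∗F(v))F′(v) satisfying the Pohozaev identity P(v) = 0. For τ > 0 define v_τ(x) = v(x/τ). Then for every τ > 0 one has I(v_τ) = ½∫_{ℝ²}|∇v|² + (τ²/2 − τ^{2+α}/(2+α)) ∫_{ℝ²}|v|²; in particular I(v_τ) < I(v) for every τ > 0 with τ ≠ 1, and there exists τ₁ > 1 such that I(v_τ) < 0 for all τ ≥ τ₁. -/

import Mathlib

noncomputable section

open MeasureTheory Real Filter Topology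

/-- The plane `ℝ²`. -/
abbrev Pt : Type := EuclideanSpace ℝ (Fin 2)

/-- An element of `H¹(ℝ²)`: a square-integrable function together with a square-integrable
weak gradient. -/
structure H1Fn where
  toFun : Pt → ℝ
  grad : Pt → Pt
  memL2 : MemLp toFun 2 (volume : Measure Pt)
  gradMemL2 : MemLp grad 2 (volume : Measure Pt)
  isWeakGrad : ∀ φ : Pt → ℝ, ContDiff ℝ (⊤ : ℕ∞) φ → HasCompactSupport φ → ∀ i : Fin 2,
    ∫ x, toFun x * fderiv ℝ φ x (EuclideanSpace.single i 1) = - ∫ x, grad x i * φ x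

/-- Normalisation constant of the Riesz potential in dimension 2. -/
def rieszA (α : ℝ) : ℝ := Real.Gamma ((2 - α) / 2) / (Real.Gamma (α / 2) * π * 2 ^ α)

/-- The Riesz potential `I_α` in the plane. -/
def riesz (α : ℝ) (x : Pt) : ℝ := rieszA α / ‖x‖ ^ (2 - α)

/-- Convolution with the Riesz potential: `(I_α ∗ f)(x)`. -/
def rieszConv (α : ℝ) (f : Pt → ℝ) (x : Pt) : ℝ := ∫ y, riesz α (x - y) * f y

/-- The nonlocal term `∫ (I_α ∗ F(u)) F(u)`. -/
def nonlocalTerm (α : ℝ) (F : ℝ → ℝ) (u : Pt → ℝ) : ℝ :=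
  ∫ x, rieszConv α (fun y => F (u y)) x * F (u x)

/-- The energy functional `I`. -/
def energy (α : ℝ) (F : ℝ → ℝ) (u : H1Fn) : ℝ :=
  (1 / 2) * (∫ x, (‖u.grad x‖ ^ 2 + (u.toFun x) ^ 2)) - (1 / 2) * nonlocalTerm α F u.toFun

/-- The Pohozaev functional `P`. -/
def poho (α : ℝ) (F : ℝ → ℝ) (u : H1Fn) : ℝ :=
  (∫ x, (u.toFun x) ^ 2) - (1 + α / 2) * nonlocalTerm α F u.toFun

/-- `u` is a weak solution of the Choquard equation `-Δu + u = (I_α ∗ F(u)) F'(u)`. -/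
def IsWeakSolution (α : ℝ) (F : ℝ → ℝ) (u : H1Fn) : Prop :=
  ∀ φ : Pt → ℝ, ContDiff ℝ (⊤ : ℕ∞) φ → HasCompactSupport φ →
    (∫ x, ((∑ i, u.grad x i * fderiv ℝ φ x (EuclideanSpace.single i 1)) + u.toFun x * φ x))
      = ∫ x, rieszConv α (fun y => F (u.toFun y)) x * deriv F (u.toFun x) * φ x

/-- `u` is nontrivial, i.e. not almost everywhere zero. -/
def NontrivialFn (u : H1Fn) : Prop :=
  ¬ (u.toFun =ᵐ[(volume : Measure Pt)] fun _ => 0)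

/-- Condition (F0). -/
def CondF0 (F : ℝ → ℝ) : Prop := ∃ s₀ : ℝ, F s₀ ≠ 0

/-- Condition (F1). -/
def CondF1 (α : ℝ) (F : ℝ → ℝ) : Prop :=
  ∀ θ : ℝ, 0 < θ → ∃ C : ℝ, 0 < C ∧ ∀ s : ℝ,
    |deriv F s| ≤ C * min 1 (|s| ^ (α / 2)) * Real.exp (θ * s ^ 2)

/-- Condition (F2). -/
def CondF2 (α : ℝ) (F : ℝ → ℝ) : Prop :=
  Tendsto (fun s : ℝ => F s / |s| ^ (1 + α / 2)) (𝓝[≠] (0 : ℝ)) (𝓝 0)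

/-- The `H¹` norm. -/
def H1norm (u : H1Fn) : ℝ :=
  Real.sqrt (∫ x, (‖u.grad x‖ ^ 2 + (u.toFun x) ^ 2))

/-- The `H¹` distance. -/
def H1dist (u v : H1Fn) : ℝ :=
  Real.sqrt (∫ x, (‖u.grad x - v.grad x‖ ^ 2 + (u.toFun x - v.toFun x) ^ 2))

/-- The admissible paths for the mountain-pass level: continuous (for the `H¹` distance) paths
joining `0` to a point of negative energy. -/
def IsPath (α : ℝ) (F : ℝ → ℝ) (γ : ℝ → H1Fn) : Prop :=
  (∀ t ∈ Set.Icc (0 : ℝ) 1, ∀ ε > (0 : ℝ), ∃ δ > (0 : ℝ), ∀ s ∈ Set.Icc (0 : ℝ) 1,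
      |s - t| < δ → H1dist (γ s) (γ t) < ε) ∧
  ((γ 0).toFun =ᵐ[(volume : Measure Pt)] fun _ => 0) ∧
  ((γ 0).grad =ᵐ[(volume : Measure Pt)] fun _ => 0) ∧
  energy α F (γ 1) < 0

/-- The mountain-pass level `b`, as an extended real number. -/
def mpLevel (α : ℝ) (F : ℝ → ℝ) : EReal :=
  ⨅ γ ∈ {γ : ℝ → H1Fn | IsPath α F γ}, ⨆ t ∈ Set.Icc (0 : ℝ) 1, (energy α F (γ t) : EReal)

/-- The derivative of the energy functional `I'(u)[φ]`. -/
def Iprime (α : ℝ) (F : ℝ → ℝ) (u φ : H1Fn) : ℝ :=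
  (∫ x, ((∑ i, u.grad x i * φ.grad x i) + u.toFun x * φ.toFun x)) -
    ∫ x, rieszConv α (fun y => F (u.toFun y)) x * deriv F (u.toFun x) * φ.toFun x

/-- The dual norm `‖I'(u)‖_*`. -/
def dualNorm (α : ℝ) (F : ℝ → ℝ) (u : H1Fn) : ℝ :=
  sSup {r : ℝ | ∃ φ : H1Fn, H1norm φ ≤ 1 ∧ r = |Iprime α F u φ|}

/-- The groundstate level `c`. -/
def groundLevel (α : ℝ) (F : ℝ → ℝ) : ℝ :=
  sInf (energy α F '' {v : H1Fn | IsWeakSolution α F v ∧ NontrivialFn v})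

/-- The energy of the dilation `v_τ = v(·/τ)` of `v`. -/
def scaledEnergy (α : ℝ) (F : ℝ → ℝ) (v : H1Fn) (τ : ℝ) : ℝ :=
  (1 / 2) * (∫ x, (‖(τ⁻¹ • v.grad (τ⁻¹ • x) : Pt)‖ ^ 2 + (v.toFun (τ⁻¹ • x)) ^ 2))
    - (1 / 2) * nonlocalTerm α F (fun x => v.toFun (τ⁻¹ • x))


/-! ### Auxiliary lemmas -/

lemma aux_cov (τ : ℝ) (hτ : 0 < τ) (f : Pt → ℝ) :
    ∫ x, f (τ⁻¹ • x) = τ ^ 2 * ∫ x, f x := by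
  rw [MeasureTheory.Measure.integral_comp_inv_smul_of_nonneg volume f hτ.le]
  simp [finrank_euclideanSpace, smul_eq_mul]

lemma aux_riesz_smul (α τ : ℝ) (hτ : 0 < τ) (z : Pt) :
    riesz α (τ • z) = τ ^ (α - 2) * riesz α z := by
  unfold riesz
  rw [norm_smul, Real.norm_eq_abs, abs_of_pos hτ, Real.mul_rpow hτ.le (norm_nonneg z),
    show α - 2 = -(2 - α) by ring, Real.rpow_neg hτ.le, mul_comm (τ ^ (2 - α)), ← div_div,
    div_eq_inv_mul _ (τ ^ (2 - α))]

lemma aux_nonlocal_scale (α : ℝ) (F : ℝ → ℝ) (g : Pt → ℝ) (τ : ℝ) (hτ : 0 < τ) :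
    nonlocalTerm α F (fun x => g (τ⁻¹ • x)) = τ ^ ((2 : ℝ) + α) * nonlocalTerm α F g := by
  have hconv : ∀ x : Pt, rieszConv α (fun y => F (g (τ⁻¹ • y))) x
      = τ ^ 2 * ∫ w, riesz α (x - τ • w) * F (g w) := by
    intro x
    unfold rieszConv
    rw [show (fun y => riesz α (x - y) * F (g (τ⁻¹ • y)))
        = fun y => (fun w => riesz α (x - τ • w) * F (g w)) (τ⁻¹ • y) by
      funext y; simp [smul_smul, mul_inv_cancel₀ hτ.ne']]
    exact aux_cov τ hτ (fun w => riesz α (x - τ • w) * F (g w))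
  have step1 : nonlocalTerm α F (fun x => g (τ⁻¹ • x))
      = τ ^ 2 * ∫ x, (τ ^ 2 * ∫ w, riesz α (τ • (x - w)) * F (g w)) * F (g x) := by
    unfold nonlocalTerm
    rw [show (fun x => rieszConv α (fun y => F (g (τ⁻¹ • y))) x * F (g (τ⁻¹ • x)))
        = fun x => (fun x' => (τ ^ 2 * ∫ w, riesz α (τ • (x' - w)) * F (g w)) * F (g x'))
          (τ⁻¹ • x) by
      funext x
      rw [hconv x]
      have : ∀ w : Pt, τ • (τ⁻¹ • x - w) = x - τ • w := by
        intro w; rw [smul_sub, smul_smul, mul_inv_cancel₀ hτ.ne', one_smul]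
      simp only [this]]
    exact aux_cov τ hτ
      (fun x' => (τ ^ 2 * ∫ w, riesz α (τ • (x' - w)) * F (g w)) * F (g x'))
  have inner : ∀ x' : Pt, (∫ w, riesz α (τ • (x' - w)) * F (g w))
      = τ ^ (α - 2) * rieszConv α (fun y => F (g y)) x' := by
    intro x'
    unfold rieszConv
    rw [← MeasureTheory.integral_const_mul]
    congr 1; funext w; rw [aux_riesz_smul α τ hτ]; ring
  rw [step1]
  rw [show (fun x => (τ ^ 2 * ∫ w, riesz α (τ • (x - w)) * F (g w)) * F (g x))
      = fun x => (τ ^ 2 * τ ^ (α - 2)) * (rieszConv α (fun y => F (g y)) x * F (g x)) by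
    funext x; rw [inner x]; ring]
  rw [MeasureTheory.integral_const_mul]
  have hpow : (τ : ℝ) ^ 2 * (τ ^ 2 * τ ^ (α - 2)) = τ ^ ((2 : ℝ) + α) := by
    rw [← Real.rpow_natCast τ 2, ← Real.rpow_add hτ, ← Real.rpow_add hτ]
    norm_num
  rw [show nonlocalTerm α F g = ∫ x, rieszConv α (fun y => F (g y)) x * F (g x) from rfl]
  rw [← mul_assoc, hpow]

lemma aux_fderiv (α : ℝ) (hα0 : 0 < α) (t : ℝ) (ht : 0 < t) :
    HasDerivAt (fun s : ℝ => s ^ 2 / 2 - s ^ ((2 : ℝ) + α) / (2 + α)) (t - t ^ ((1 : ℝ) + α)) t := by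
  have h2α : (0 : ℝ) < 2 + α := by linarith
  have h1 : HasDerivAt (fun s : ℝ => s ^ 2 / 2) t t := by
    simpa using (hasDerivAt_pow 2 t).div_const 2
  have h2 : HasDerivAt (fun s : ℝ => s ^ ((2 : ℝ) + α) / (2 + α)) (t ^ ((1 : ℝ) + α)) t := by
    have := (Real.hasDerivAt_rpow_const (p := (2 : ℝ) + α) (Or.inl ht.ne')).div_const (2 + α)
    have he : (2 + α) * t ^ ((2 : ℝ) + α - 1) / (2 + α) = t ^ ((1 : ℝ) + α) := by
      rw [show (2 : ℝ) + α - 1 = 1 + α by ring, mul_comm, mul_div_assoc, div_self h2α.ne',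
        mul_one]
    rwa [he] at this
  exact h1.sub h2

lemma aux_fcont (α : ℝ) (hα0 : 0 < α) :
    Continuous (fun s : ℝ => s ^ 2 / 2 - s ^ ((2 : ℝ) + α) / (2 + α)) := by
  apply Continuous.sub
  · continuity
  · apply Continuous.div_const
    rw [continuous_iff_continuousAt]
    intro x
    exact Real.continuousAt_rpow_const x _ (Or.inr (by linarith))

lemma aux_fmax (α : ℝ) (hα0 : 0 < α) (τ : ℝ) (hτ : 0 < τ) (hτ1 : τ ≠ 1) :
    τ ^ 2 / 2 - τ ^ ((2 : ℝ) + α) / (2 + α) < 1 / 2 - 1 / (2 + α) := by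
  set f := fun s : ℝ => s ^ 2 / 2 - s ^ ((2 : ℝ) + α) / (2 + α) with hf
  have hfone : f 1 = 1 / 2 - 1 / (2 + α) := by simp [hf, Real.one_rpow]
  rw [← hfone]
  rcases lt_or_gt_of_ne hτ1 with h | h
  · have hmono : StrictMonoOn f (Set.Icc (0 : ℝ) 1) := by
      apply strictMonoOn_of_deriv_pos (convex_Icc 0 1) (aux_fcont α hα0).continuousOn
      intro x hx
      rw [interior_Icc] at hx
      rw [(aux_fderiv α hα0 x hx.1).deriv]
      have : x ^ ((1 : ℝ) + α) < x ^ (1 : ℝ) :=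
        Real.rpow_lt_rpow_of_exponent_gt hx.1 hx.2 (by linarith)
      rw [Real.rpow_one] at this
      linarith
    exact hmono ⟨hτ.le, h.le⟩ ⟨zero_le_one, le_refl 1⟩ h
  · have hanti : StrictAntiOn f (Set.Ici (1 : ℝ)) := by
      apply strictAntiOn_of_deriv_neg (convex_Ici 1) (aux_fcont α hα0).continuousOn
      intro x hx
      rw [interior_Ici] at hx
      rw [(aux_fderiv α hα0 x (by linarith [Set.mem_Ioi.mp hx])).deriv]
      have : x ^ (1 : ℝ) < x ^ ((1 : ℝ) + α) :=
        Real.rpow_lt_rpow_of_exponent_lt hx (by linarith)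
      rw [Real.rpow_one] at this
      linarith
    exact hanti Set.self_mem_Ici h.le h

/-- energy along the dilation path of a solution. -/
theorem stmt_15 (α : ℝ) (hα : 0 < α ∧ α < 2) (F : ℝ → ℝ) (hF : ContDiff ℝ 1 F)
    (hF1 : CondF1 α F) (v : H1Fn) (hsol : IsWeakSolution α F v) (hnt : NontrivialFn v)
    (hpoho : poho α F v = 0) :
    (∀ τ : ℝ, 0 < τ →
      scaledEnergy α F v τ = (1 / 2) * (∫ x, ‖v.grad x‖ ^ 2)
        + (τ ^ 2 / 2 - τ ^ ((2 : ℝ) + α) / (2 + α)) * ∫ x, (v.toFun x) ^ 2) ∧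
    (∀ τ : ℝ, 0 < τ → τ ≠ 1 → scaledEnergy α F v τ < energy α F v) ∧
    (∃ τ₁ : ℝ, 1 < τ₁ ∧ ∀ τ : ℝ, τ₁ ≤ τ → scaledEnergy α F v τ < 0) := by
  obtain ⟨hα0, hα2⟩ := hα
  have h2α : (0 : ℝ) < 2 + α := by linarith
  set G := ∫ x, ‖v.grad x‖ ^ 2 with hGdef
  set S := ∫ x, (v.toFun x) ^ 2 with hSdef
  set N := nonlocalTerm α F v.toFun with hNdef
  have hGint : Integrable (fun x => ‖v.grad x‖ ^ 2) (volume : Measure Pt) :=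
    v.gradMemL2.norm.integrable_sq
  have hSint : Integrable (fun x => (v.toFun x) ^ 2) (volume : Measure Pt) :=
    v.memL2.integrable_sq
  have hGnn : 0 ≤ G := integral_nonneg fun x => sq_nonneg _
  have hSnn : 0 ≤ S := integral_nonneg fun x => sq_nonneg _
  have hS0 : S ≠ 0 := by
    intro h
    apply hnt
    rw [hSdef] at h
    have h0 := (integral_eq_zero_iff_of_nonneg (fun x => sq_nonneg (v.toFun x)) hSint).mp h
    filter_upwards [h0] with x hx
    have hx2 : v.toFun x ^ 2 = 0 := by simpa using hx
    exact pow_eq_zero_iff two_ne_zero |>.mp hx2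
  have hSpos : 0 < S := lt_of_le_of_ne hSnn (Ne.symm hS0)
  have hN : N = 2 * S / (2 + α) := by
    have h := hpoho
    unfold poho at h
    rw [← hSdef, ← hNdef] at h
    field_simp
    linear_combination -2 * h
  have key : ∀ τ : ℝ, 0 < τ →
      scaledEnergy α F v τ = (1 / 2) * G + (τ ^ 2 / 2 - τ ^ ((2 : ℝ) + α) / (2 + α)) * S := by
    intro τ hτ
    have hτne : τ⁻¹ ≠ 0 := inv_ne_zero hτ.ne'
    have heq : (fun x : Pt => ‖(τ⁻¹ • v.grad (τ⁻¹ • x) : Pt)‖ ^ 2)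
        = fun x => (fun y => (τ⁻¹) ^ 2 * ‖v.grad y‖ ^ 2) (τ⁻¹ • x) := by
      funext x
      simp only [norm_smul, Real.norm_eq_abs, abs_of_pos (inv_pos.mpr hτ), mul_pow]
    have hI1 : Integrable (fun x : Pt => ‖(τ⁻¹ • v.grad (τ⁻¹ • x) : Pt)‖ ^ 2)
        (volume : Measure Pt) := by
      rw [heq]
      exact ((integrable_comp_smul_iff volume (fun x : Pt => (τ⁻¹) ^ 2 * ‖v.grad x‖ ^ 2)
        hτne).mpr (hGint.const_mul _))
    have hI2 : Integrable (fun x : Pt => (v.toFun (τ⁻¹ • x)) ^ 2) (volume : Measure Pt) :=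
      (integrable_comp_smul_iff volume (fun x : Pt => (v.toFun x) ^ 2) hτne).mpr hSint
    have hA : ∫ x, ‖(τ⁻¹ • v.grad (τ⁻¹ • x) : Pt)‖ ^ 2 = G := by
      rw [heq, aux_cov τ hτ (fun y => (τ⁻¹) ^ 2 * ‖v.grad y‖ ^ 2),
        MeasureTheory.integral_const_mul, ← hGdef]
      field_simp
    have hB : ∫ x, (v.toFun (τ⁻¹ • x)) ^ 2 = τ ^ 2 * S := by
      have := aux_cov τ hτ (fun y => (v.toFun y) ^ 2)
      simpa [← hSdef] using this
    have hC := aux_nonlocal_scale α F v.toFun τ hτ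
    rw [← hNdef] at hC
    unfold scaledEnergy
    rw [integral_add hI1 hI2, hA, hB, hC, hN]
    field_simp
    ring
  have hE : energy α F v = (1 / 2) * G + ((1 : ℝ) / 2 - 1 / (2 + α)) * S := by
    unfold energy
    rw [integral_add hGint hSint, ← hGdef, ← hSdef, ← hNdef, hN]
    field_simp
    ring
  refine ⟨fun τ hτ => key τ hτ, ?_, ?_⟩
  · intro τ hτ hτ1
    rw [key τ hτ, hE]
    have := aux_fmax α hα0 τ hτ hτ1
    nlinarith [hSpos]
  · refine ⟨max (max ((2 + α) ^ (α⁻¹)) (Real.sqrt (G / S) + 1)) 2,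
      lt_of_lt_of_le one_lt_two (le_max_right _ _), ?_⟩
    intro τ hτT
    have hτ2 : (2 : ℝ) ≤ τ := le_trans (le_max_right _ _) hτT
    have hτ : (0 : ℝ) < τ := by linarith
    rw [key τ hτ]
    have h1 : (2 + α) ≤ τ ^ α := by
      have hb : (2 + α) ^ (α⁻¹) ≤ τ :=
        le_trans (le_trans (le_max_left _ _) (le_max_left _ _)) hτT
      calc (2 + α) = ((2 + α) ^ (α⁻¹)) ^ α := by
            rw [← Real.rpow_mul h2α.le, inv_mul_cancel₀ hα0.ne', Real.rpow_one]
        _ ≤ τ ^ α := Real.rpow_le_rpow (Real.rpow_nonneg h2α.le _) hb hα0.le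
    have h2 : G < τ ^ 2 * S := by
      have hs : Real.sqrt (G / S) + 1 ≤ τ :=
        le_trans (le_trans (le_max_right _ _) (le_max_left _ _)) hτT
      have h0 : Real.sqrt (G / S) < τ := by linarith
      have hGS : G / S < τ ^ 2 := by
        have hsq := Real.sq_sqrt (div_nonneg hGnn hSpos.le)
        nlinarith [Real.sqrt_nonneg (G / S)]
      calc G = (G / S) * S := by field_simp
        _ < τ ^ 2 * S := by nlinarith [hSpos]
    have hsplit : τ ^ ((2 : ℝ) + α) = τ ^ 2 * τ ^ α := by
      rw [← Real.rpow_natCast τ 2, ← Real.rpow_add hτ]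
      norm_num
    rw [hsplit]
    have hdiv : τ ^ 2 ≤ τ ^ 2 * τ ^ α / (2 + α) := by
      rw [le_div_iff₀ h2α]
      nlinarith [sq_nonneg τ]
    have hdivS : τ ^ 2 * S ≤ (τ ^ 2 * τ ^ α / (2 + α)) * S :=
      mul_le_mul_of_nonneg_right hdiv hSnn
    have hfin : (τ ^ 2 / 2 - τ ^ 2 * τ ^ α / (2 + α)) * S
        ≤ τ ^ 2 / 2 * S - τ ^ 2 * S := by nlinarith [hdivS]
    linarith


end
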